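/- arXiv:0910.1435 — 5 statements merged into one kernel-verified Lean document; each statement's English description precedes it below -/
import Mathlib

section
/- Let f : ℝ → ℝ be a C^∞ function, let κ be a natural number, and let t ∈ ℝ. Let M be the (κ+1)×(κ+1) real matrix whose entry in row l and column j (with 0 ≤ l, j ≤ κ) is the value at t of the l-th iterated derivative of f^j (with f^0 the constant function 1). Then det M = (1! · 2! · ⋯ · κ!) · (f'(t))^{κ(κ+1)/2}. In particular det M ≠ 0 at every point where f'(t) ≠ 0. -/
open Finset

noncomputable def cc (f : ℝ → ℝ) : ℕ → ℕ → ℝ → ℝ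
  | 0, 0 => fun _ => 1
  | 0, _ + 1 => fun _ => 0
  | l + 1, 0 => deriv (cc f l 0)
  | l + 1, m + 1 => deriv (cc f l (m + 1)) + cc f l m * deriv f

lemma cc_contDiff {f : ℝ → ℝ} (hf : ContDiff ℝ (⊤ : ℕ∞) f) : ∀ l m, ContDiff ℝ (⊤ : ℕ∞) (cc f l m) := by
  intro l
  induction l with
  | zero => intro m; cases m with
    | zero => exact contDiff_const
    | succ m => exact contDiff_const
  | succ l ih =>
    intro m
    cases m with
    | zero => exact (contDiff_infty_iff_deriv.mp (ih 0)).2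
    | succ m =>
      exact ((contDiff_infty_iff_deriv.mp (ih (m+1))).2).add
        ((ih m).mul (contDiff_infty_iff_deriv.mp hf).2)

lemma cc_zero {f : ℝ → ℝ} : ∀ l m, l < m → cc f l m = 0 := by
  intro l
  induction l with
  | zero => intro m hm
            match m, hm with
            | m + 1, _ => rfl
  | succ l ih =>
    intro m hm
    match m, hm with
    | m + 1, hm =>
      have h1 : cc f l (m + 1) = 0 := ih (m+1) (by omega)
      have h2 : cc f l m = 0 := ih m (by omega)
      show deriv (cc f l (m + 1)) + cc f l m * deriv f = 0
      rw [h1, h2]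
      funext x
      simp only [Pi.add_apply, Pi.mul_apply, Pi.zero_apply, zero_mul, add_zero]
      exact deriv_const x 0

lemma cc_diag {f : ℝ → ℝ} : ∀ l (x : ℝ), cc f l l x = (deriv f x) ^ l := by
  intro l
  induction l with
  | zero => intro x; rfl
  | succ l ih =>
    intro x
    show (deriv (cc f l (l + 1)) + cc f l l * deriv f) x = _
    rw [cc_zero l (l+1) (by omega)]
    simp only [Pi.add_apply, Pi.mul_apply, Pi.zero_apply]
    rw [show deriv (0:ℝ→ℝ) x = 0 from deriv_const x 0, ih x, pow_succ, zero_add]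

lemma key {f : ℝ → ℝ} (hf : ContDiff ℝ (⊤ : ℕ∞) f) : ∀ l j, iteratedDeriv l (f ^ j) =
    fun x => ∑ m ∈ range (l + 1), cc f l m x * (j.descFactorial m : ℝ) * f x ^ (j - m) := by
  have hfd : Differentiable ℝ f := hf.differentiable (by simp)
  intro l
  induction l with
  | zero =>
    intro j
    funext x
    simp [iteratedDeriv_zero, cc]
  | succ l ih =>
    intro j
    rw [iteratedDeriv_succ, ih j]
    funext x
    have hterm : ∀ m, HasDerivAt
        (fun x => cc f l m x * (j.descFactorial m : ℝ) * f x ^ (j - m))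
        (deriv (cc f l m) x * (j.descFactorial m : ℝ) * f x ^ (j - m)
          + cc f l m x * (j.descFactorial m : ℝ) *
            ((j - m : ℕ) * f x ^ (j - m - 1) * deriv f x)) x := by
      intro m
      have hc : HasDerivAt (cc f l m) (deriv (cc f l m) x) x :=
        (((cc_contDiff hf l m).differentiable (by simp)) x).hasDerivAt
      have hp : HasDerivAt (fun x => f x ^ (j - m))
          ((j - m : ℕ) * f x ^ (j - m - 1) * deriv f x) x :=
        (hfd x).hasDerivAt.pow _
      simpa [mul_assoc, mul_comm, mul_left_comm] using
        (hc.mul_const (j.descFactorial m : ℝ)).fun_mul hp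
    have hsum : HasDerivAt
        (fun x => ∑ m ∈ range (l + 1), cc f l m x * (j.descFactorial m : ℝ) * f x ^ (j - m))
        (∑ m ∈ range (l + 1),
          (deriv (cc f l m) x * (j.descFactorial m : ℝ) * f x ^ (j - m)
            + cc f l m x * (j.descFactorial m : ℝ) *
              ((j - m : ℕ) * f x ^ (j - m - 1) * deriv f x))) x :=
      HasDerivAt.fun_sum fun m _ => hterm m
    rw [hsum.deriv, Finset.sum_add_distrib]
    have h1 : ∑ m ∈ range (l + 1),
        deriv (cc f l m) x * (j.descFactorial m : ℝ) * f x ^ (j - m)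
        = ∑ m ∈ range (l + 2),
          deriv (cc f l m) x * (j.descFactorial m : ℝ) * f x ^ (j - m) := by
      rw [Finset.sum_range_succ
        (fun m => deriv (cc f l m) x * (j.descFactorial m : ℝ) * f x ^ (j - m)) (l+1),
        cc_zero l (l+1) (by omega)]
      rw [show deriv (0:ℝ→ℝ) x = 0 from deriv_const x 0]
      ring
    have h2 : ∑ m ∈ range (l + 1),
        cc f l m x * (j.descFactorial m : ℝ) *
          ((j - m : ℕ) * f x ^ (j - m - 1) * deriv f x)
        = ∑ m ∈ range (l + 1),
          cc f l m x * deriv f x * (j.descFactorial (m + 1) : ℝ) * f x ^ (j - (m + 1)) := by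
      refine Finset.sum_congr rfl fun m _ => ?_
      rw [Nat.descFactorial_succ, Nat.cast_mul, Nat.sub_sub]
      ring
    rw [h1, h2]
    rw [show l + 1 + 1 = l + 2 from rfl]
    rw [Finset.sum_range_succ' (fun m => deriv (cc f l m) x * (j.descFactorial m : ℝ) * f x ^ (j - m)) (l+1),
        Finset.sum_range_succ' (fun m => cc f (l+1) m x * (j.descFactorial m : ℝ) * f x ^ (j - m)) (l+1)]
    have h3 : ∀ m, cc f (l+1) (m+1) x * (j.descFactorial (m+1) : ℝ) * f x ^ (j - (m+1))
        = deriv (cc f l (m+1)) x * (j.descFactorial (m+1) : ℝ) * f x ^ (j - (m+1))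
          + cc f l m x * deriv f x * (j.descFactorial (m+1) : ℝ) * f x ^ (j - (m+1)) := by
      intro m
      show (deriv (cc f l (m + 1)) + cc f l m * deriv f) x * _ * _ = _
      simp only [Pi.add_apply, Pi.mul_apply]
      ring
    have h4 : cc f (l+1) 0 x * (j.descFactorial 0 : ℝ) * f x ^ (j - 0)
        = deriv (cc f l 0) x * (j.descFactorial 0 : ℝ) * f x ^ (j - 0) := rfl
    simp only [h3, h4, Finset.sum_add_distrib]
    ring

/-- Wronskian-type determinant: for a `C^∞` function `f : ℝ → ℝ` and `t : ℝ`,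
the `(κ+1)×(κ+1)` matrix with entry `(f^j)^{(l)}(t)` in row `l`, column `j`
has determinant `1!·2!·⋯·κ! · (f'(t))^{κ(κ+1)/2}`; in particular it is nonzero
whenever `f'(t) ≠ 0`. -/
theorem det_iteratedDeriv_pow_matrix (f : ℝ → ℝ) (hf : ContDiff ℝ (⊤ : ℕ∞) f) (κ : ℕ) (t : ℝ)
    (M : Matrix (Fin (κ + 1)) (Fin (κ + 1)) ℝ)
    (hM : ∀ l j : Fin (κ + 1), M l j = iteratedDeriv (l : ℕ) (f ^ (j : ℕ)) t) :
    M.det = (∏ i ∈ Finset.range (κ + 1), (Nat.factorial i : ℝ)) *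
        (deriv f t) ^ (κ * (κ + 1) / 2) ∧
      (deriv f t ≠ 0 → M.det ≠ 0) := by
  have hf' : ContDiff ℝ (⊤ : ℕ∞) f := hf.of_le (by simp)
  set B : Matrix (Fin (κ + 1)) (Fin (κ + 1)) ℝ := fun l m => cc f (l : ℕ) (m : ℕ) t with hB
  set A : Matrix (Fin (κ + 1)) (Fin (κ + 1)) ℝ :=
    fun m j => ((j : ℕ).descFactorial (m : ℕ) : ℝ) * f t ^ ((j : ℕ) - (m : ℕ)) with hA
  have hMBA : M = B * A := by
    ext l j
    rw [hM, key hf' (l : ℕ) (j : ℕ), Matrix.mul_apply]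
    have := Fin.sum_univ_eq_sum_range
      (fun m => cc f (l : ℕ) m t *
        (((j : ℕ).descFactorial m : ℝ) * f t ^ ((j : ℕ) - m))) (κ + 1)
    simp only [hB, hA]
    rw [this]
    rw [← Finset.sum_subset (Finset.range_subset_range.mpr (by omega : (l : ℕ) + 1 ≤ κ + 1))
      (fun m _ hm => ?_)]
    · exact Finset.sum_congr rfl fun m _ => (mul_assoc _ _ _)
    · rw [cc_zero (l : ℕ) m (by simp at hm; omega)]
      simp
  have detA : A.det = ∏ i ∈ Finset.range (κ + 1), (Nat.factorial i : ℝ) := by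
    rw [Matrix.det_of_upperTriangular (by
      intro i j hij
      simp only [hA]
      rw [Nat.descFactorial_eq_zero_iff_lt.mpr (by exact_mod_cast hij)]
      simp)]
    rw [← Fin.prod_univ_eq_prod_range (fun i => (Nat.factorial i : ℝ)) (κ + 1)]
    refine Finset.prod_congr rfl fun i _ => ?_
    simp [hA, Nat.descFactorial_self]
  have detB : B.det = (deriv f t) ^ (κ * (κ + 1) / 2) := by
    rw [Matrix.det_of_lowerTriangular B (by
      intro i j hij
      simp only [hB]
      rw [cc_zero _ _ (by exact_mod_cast hij)]
      simp)]
    have : ∀ i : Fin (κ + 1), B i i = (deriv f t) ^ (i : ℕ) := fun i => cc_diag _ _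
    rw [Finset.prod_congr rfl fun i _ => this i,
      Fin.prod_univ_eq_prod_range (fun i => (deriv f t) ^ i) (κ + 1),
      Finset.prod_pow_eq_pow_sum, Finset.sum_range_id]
    congr 1
    rw [Nat.add_sub_cancel, Nat.mul_comm]
  have hdet : M.det = (∏ i ∈ Finset.range (κ + 1), (Nat.factorial i : ℝ)) *
      (deriv f t) ^ (κ * (κ + 1) / 2) := by
    rw [hMBA, Matrix.det_mul, detB, detA, mul_comm]
  refine ⟨hdet, fun h => ?_⟩
  rw [hdet]
  exact mul_ne_zero
    (Finset.prod_ne_zero_iff.mpr fun i _ => Nat.cast_ne_zero.mpr (Nat.factorial_ne_zero i))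
    (pow_ne_zero _ h)
end

section
/- Let K be a field of characteristic zero, let n ≥ 1, let μ : Fin n → ℕ be a multiindex, let κ be a natural number, and let p ∈ K^n. Suppose P is a polynomial in n variables over K such that the degree of P in the i-th variable is at most μ_i for every i, and the total degree of P is at most κ. If for every multiindex δ : Fin n → ℕ with δ_i ≤ μ_i for all i and Σ_i δ_i ≤ κ, the iterated partial derivative ∂^δ P vanishes at the point p, then P = 0. -/
/-- The iterated partial derivative `∂^δ P` of a multivariate polynomial:
differentiate `δ i` times with respect to the `i`-th variable, for each `i`. -/
noncomputable def iterPderiv {K : Type*} [CommSemiring K] {n : ℕ} (δ : Fin n → ℕ)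
    (P : MvPolynomial (Fin n) K) : MvPolynomial (Fin n) K :=
  (List.finRange n).foldl (fun Q i => (fun R => MvPolynomial.pderiv i R)^[δ i] Q) P

/-!
Pick an exponent `d` maximal (for the componentwise order) in the support of `P ≠ 0`. It satisfies
`d ≤ μ` and `|d| ≤ κ`, and differentiating `d` kills every monomial except `X^d`, so `∂^d P` is the
constant `d! · coeff d P`, which is nonzero in characteristic zero.
-/

open MvPolynomial Finsupp

section

variable {R σ : Type*} [CommSemiring R]

theorem MvPolynomial.coeff_pderiv_iterate (i : σ) (k : ℕ) (m : σ →₀ ℕ) (p : MvPolynomial σ R) :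
    coeff m ((pderiv i)^[k] p) = coeff (m + single i k) p * (m i + k).descFactorial k := by
  induction k generalizing m with
  | zero => simp
  | succ k ih =>
    rw [Function.iterate_succ_apply', coeff_pderiv, ih, add_assoc, ← single_add, add_comm 1 k,
      Finsupp.add_apply, single_eq_same, ← add_assoc (m i), Nat.descFactorial_succ,
      show m i + k + 1 - k = m i + 1 by omega, add_right_comm (m i) 1 k]
    push_cast
    ring

theorem MvPolynomial.coeff_foldl_pderiv_iterate [DecidableEq σ] (δ : σ → ℕ) {L : List σ}
    (hL : L.Nodup) (m : σ →₀ ℕ) (p : MvPolynomial σ R) :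
    coeff m (L.foldl (fun q i => (pderiv i)^[δ i] q) p) =
      (∏ i ∈ L.toFinset, ((m i + δ i).descFactorial (δ i) : R)) *
        coeff (m + ∑ i ∈ L.toFinset, single i (δ i)) p := by
  induction L generalizing p with
  | nil => simp
  | cons i L ih =>
    obtain ⟨hiL, hL⟩ := List.nodup_cons.mp hL
    have hi : i ∉ L.toFinset := List.mem_toFinset.not.mpr hiL
    have hm : (m + ∑ j ∈ L.toFinset, single j (δ j)) i = m i := by
      simp [single_apply, hiL]
    rw [List.foldl_cons, ih hL, coeff_pderiv_iterate, hm, List.toFinset_cons,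
      Finset.prod_insert hi, Finset.sum_insert hi, add_assoc, add_comm (single i (δ i))]
    ring

variable {n : ℕ}

theorem coeff_iterPderiv (δ : Fin n → ℕ) (m : Fin n →₀ ℕ)
    (P : MvPolynomial (Fin n) R) :
    coeff m (iterPderiv δ P) =
      (∏ i, ((m i + δ i).descFactorial (δ i) : R)) * coeff (m + equivFunOnFinite.symm δ) P := by
  rw [iterPderiv, coeff_foldl_pderiv_iterate δ (List.nodup_finRange n), List.toFinset_finRange]
  congr 3
  ext j
  simp [Finsupp.finsetSum_apply, single_apply]

theorem iterPderiv_eq_C_of_forall_le {P : MvPolynomial (Fin n) R} {d : Fin n →₀ ℕ}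
    (hd : ∀ e ∈ P.support, d ≤ e → e ≤ d) :
    iterPderiv d P = C ((∏ i, ((d i).factorial : R)) * coeff d P) := by
  ext m
  rw [coeff_iterPderiv, equivFunOnFinite_symm_coe, coeff_C]
  split_ifs with hm
  · simp [← hm, Nat.descFactorial_self]
  · have : coeff (m + d) P = 0 := by
      by_contra h
      exact hm (le_zero_iff.mp (add_le_iff_nonpos_left.mp
        (hd _ (MvPolynomial.mem_support_iff.mpr h) le_add_self))).symm
    rw [this, mul_zero]

end

theorem mvpolynomial_eq_zero_of_derivs_vanish_general {K : Type*} [Field K] [CharZero K]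
    (n : ℕ) (μ : Fin n → ℕ) (κ : ℕ) (p : Fin n → K)
    (P : MvPolynomial (Fin n) K)
    (hdeg : ∀ i : Fin n, P.degreeOf i ≤ μ i)
    (htot : P.totalDegree ≤ κ)
    (hvanish : ∀ δ : Fin n → ℕ, (∀ i, δ i ≤ μ i) → (∑ i, δ i) ≤ κ →
      MvPolynomial.eval p (iterPderiv δ P) = 0) :
    P = 0 := by
  by_contra hP
  obtain ⟨d, hd⟩ := P.support.exists_maximal (support_nonempty.mpr hP)
  have hdμ : ∀ i, d i ≤ μ i := fun i => (monomial_le_degreeOf i hd.1).trans (hdeg i)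
  have hdκ : ∑ i, d i ≤ κ := (degree_eq_sum d).symm.trans_le ((le_totalDegree hd.1).trans htot)
  have hfact : ∏ i, ((d i).factorial : K) ≠ 0 :=
    Finset.prod_ne_zero_iff.mpr fun i _ => Nat.cast_ne_zero.mpr (Nat.factorial_ne_zero _)
  have hzero := hvanish d hdμ hdκ
  rw [iterPderiv_eq_C_of_forall_le hd.2, eval_C] at hzero
  exact mul_ne_zero hfact (MvPolynomial.mem_support_iff.mp hd.1) hzero

/-- Let `K` be a field of characteristic zero, `μ` a multiindex, `κ : ℕ`, `p ∈ K^n`.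
If `P` has degree at most `μ i` in the `i`-th variable and total degree at most `κ`,
and all iterated partial derivatives `∂^δ P` with `δ ≤ μ` and `|δ| ≤ κ` vanish at `p`,
then `P = 0`. -/
theorem mvpolynomial_eq_zero_of_derivs_vanish {K : Type*} [Field K] [CharZero K]
    (n : ℕ) (hn : 1 ≤ n) (μ : Fin n → ℕ) (κ : ℕ) (p : Fin n → K)
    (P : MvPolynomial (Fin n) K)
    (hdeg : ∀ i : Fin n, P.degreeOf i ≤ μ i)
    (htot : P.totalDegree ≤ κ)
    (hvanish : ∀ δ : Fin n → ℕ, (∀ i, δ i ≤ μ i) → (∑ i, δ i) ≤ κ →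
      MvPolynomial.eval p (iterPderiv δ P) = 0) :
    P = 0 :=
  mvpolynomial_eq_zero_of_derivs_vanish_general n μ κ p P hdeg htot hvanish
end

section
/- Let K be a commutative ring, let I be a (index) type, let κ be a natural number, and let R be the polynomial ring over K in the variables {a_α : α ∈ I} together with the variables z^{(0)}, z^{(1)}, …, z^{(κ+1)}. Let D be the K-derivation of R determined on generators by D(a_α) = 0 for all α, D(z^{(λ)}) = z^{(λ+1)} for 0 ≤ λ ≤ κ, and D(z^{(κ+1)}) = 0. Let P be a polynomial lying in the subring generated by the z-variables, let (A_α)_{α ∈ I} be elements of R, and let T be the K-derivation of R determined on generators by T(a_α) = A_α, T(z^{(λ)}) = D^λ(P) for 0 ≤ λ ≤ κ, and T(z^{(κ+1)}) = 0. Then the commutator T∘D − D∘T equals the K-derivation S of R determined on generators by S(a_α) = −D(A_α), S(z^{(λ)}) = 0 for 0 ≤ λ ≤ κ−1, S(z^{(κ)}) = −D^{κ+1}(P), and S(z^{(κ+1)}) = 0; that is, (T∘D − D∘T)(r) = S(r) for all r ∈ R. -/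
/-- Let `R = K[(a_α)_{α ∈ I}, z^{(0)}, …, z^{(κ+1)}]`, let `D` be the total-derivative
derivation (`D a_α = 0`, `D z^{(λ)} = z^{(λ+1)}` for `λ ≤ κ`, `D z^{(κ+1)} = 0`),
let `P` be a polynomial in the `z`-variables, and let `T` be the derivation with
`T a_α = A_α`, `T z^{(λ)} = D^λ P` for `λ ≤ κ`, `T z^{(κ+1)} = 0`.  Then the
commutator `T∘D − D∘T` is the derivation `S` with `S a_α = −D(A_α)`,
`S z^{(λ)} = 0` for `λ ≤ κ−1`, `S z^{(κ)} = −D^{κ+1} P`, `S z^{(κ+1)} = 0`. -/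
theorem commutator_of_special_vector_field {K : Type*} [CommRing K] (I : Type*) (κ : ℕ)
    (A : I → MvPolynomial (I ⊕ Fin (κ + 2)) K)
    (P : MvPolynomial (I ⊕ Fin (κ + 2)) K)
    (hP : P ∈ Algebra.adjoin K
      (Set.range fun lam : Fin (κ + 2) =>
        (MvPolynomial.X (Sum.inr lam) : MvPolynomial (I ⊕ Fin (κ + 2)) K)))
    (D T S : Derivation K (MvPolynomial (I ⊕ Fin (κ + 2)) K) (MvPolynomial (I ⊕ Fin (κ + 2)) K))
    (hD : D = MvPolynomial.mkDerivation K (Sum.elim (fun _ : I => 0)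
      (fun lam : Fin (κ + 2) =>
        if h : (lam : ℕ) ≤ κ then MvPolynomial.X (Sum.inr ⟨(lam : ℕ) + 1, by omega⟩) else 0)))
    (hT : T = MvPolynomial.mkDerivation K (Sum.elim (fun α : I => A α)
      (fun lam : Fin (κ + 2) =>
        if (lam : ℕ) ≤ κ then (⇑D)^[(lam : ℕ)] P else 0)))
    (hS : S = MvPolynomial.mkDerivation K (Sum.elim (fun α : I => -(D (A α)))
      (fun lam : Fin (κ + 2) =>
        if (lam : ℕ) = κ then -((⇑D)^[κ + 1] P) else 0))) :
    ∀ r : MvPolynomial (I ⊕ Fin (κ + 2)) K, T (D r) - D (T r) = S r := by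
  have key : (⁅T, D⁆ : Derivation K (MvPolynomial (I ⊕ Fin (κ + 2)) K)
      (MvPolynomial (I ⊕ Fin (κ + 2)) K)) = S := by
    apply MvPolynomial.derivation_ext
    intro i
    rw [Derivation.commutator_apply]
    rcases i with α | lam
    · rw [hS, MvPolynomial.mkDerivation_X]
      have h1 : D (MvPolynomial.X (Sum.inl α)) = 0 := by
        rw [hD, MvPolynomial.mkDerivation_X]; rfl
      have h2 : T (MvPolynomial.X (Sum.inl α)) = A α := by
        rw [hT, MvPolynomial.mkDerivation_X]; rfl
      rw [h1, h2, map_zero, zero_sub]; rfl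
    · rw [hS, MvPolynomial.mkDerivation_X]
      rcases lt_trichotomy (lam : ℕ) κ with h | h | h
      · -- lam < κ
        have h1 : (lam : ℕ) ≤ κ := h.le
        conv_lhs => rw [hD, hT]
        rw [MvPolynomial.mkDerivation_X, MvPolynomial.mkDerivation_X]
        simp only [Sum.elim_inr, dif_pos h1, if_pos h1, ← hD, ← hT]
        rw [hT, MvPolynomial.mkDerivation_X]
        simp only [Sum.elim_inr, Fin.val_mk, if_pos (by omega : (lam : ℕ) + 1 ≤ κ)]
        rw [Function.iterate_succ_apply' (⇑D) (lam : ℕ) P]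
        simp [Sum.elim_inr, if_neg (by omega : ¬ (lam : ℕ) = κ)]
      · -- lam = κ
        conv_lhs => rw [hD, hT]
        rw [MvPolynomial.mkDerivation_X, MvPolynomial.mkDerivation_X]
        simp only [Sum.elim_inr, dif_pos h.le, if_pos h.le, ← hD, ← hT]
        rw [hT, MvPolynomial.mkDerivation_X]
        simp only [Sum.elim_inr, Fin.val_mk, h, if_neg (by omega : ¬ κ + 1 ≤ κ),
          if_pos h, map_zero, zero_sub]
        rw [Function.iterate_succ_apply' (⇑D) κ P]; simp
      · -- lam = κ + 1
        have h1 : ¬ (lam : ℕ) ≤ κ := by omega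
        conv_lhs => rw [hD, hT]
        rw [MvPolynomial.mkDerivation_X, MvPolynomial.mkDerivation_X]
        simp [Sum.elim_inr, dif_neg h1, if_neg h1, if_neg (by omega : ¬ (lam : ℕ) = κ)]
  intro r
  rw [← key, Derivation.commutator_apply]
end

section
/- Let n ≥ 1, d ≥ 1, d₀ ≥ 1 be natural numbers and let g ≥ 0, l₀ ≥ 0 and l be integers satisfying (n+1)·d₀·l + d·l₀ > 0. Then there exists a natural number ℓ₀ such that for every integer ℓ ≥ ℓ₀: (ℓ·l + 1 − g) · binomial(ℓd + n + 1, n + 1) − (ℓ·l − l₀ + 1 − g) · binomial(ℓd − d₀ + n + 1, n + 1) > 0. -/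
open Finset

private lemma pow_pred_mul_aux (x : ℤ) (k : ℕ) :
    (k : ℤ) * x ^ (k - 1) * x = (k : ℤ) * x ^ k := by
  cases k with
  | zero => simp
  | succ j => push_cast [pow_succ]; ring

private lemma prod_bounds_aux (k : ℕ) (m B : ℤ) (g : ℕ → ℤ) (hm : 0 ≤ m)
    (hgm : ∀ i < k, m ≤ g i) (hgB : ∀ i < k, g i ≤ B) :
    m ^ k ≤ (∏ i ∈ range k, g i) ∧ (∏ i ∈ range k, g i) ≤ B ^ k := by
  induction k with
  | zero => simp
  | succ j ih =>
    obtain ⟨h1, h2⟩ := ih (fun i hi => hgm i (by omega)) (fun i hi => hgB i (by omega))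
    have hmg : m ≤ g j := hgm j (by omega)
    have hgB' : g j ≤ B := hgB j (by omega)
    have hP : (0:ℤ) ≤ ∏ i ∈ range j, g i := le_trans (pow_nonneg hm j) h1
    constructor
    · rw [prod_range_succ, pow_succ]
      exact mul_le_mul h1 hmg hm hP
    · rw [prod_range_succ, pow_succ]
      exact mul_le_mul h2 hgB' (hm.trans hmg) (pow_nonneg (hm.trans (hmg.trans hgB')) j)

private lemma prod_sub_prod_bounds_aux (k : ℕ) (e m B : ℤ) (f g : ℕ → ℤ)
    (hm : 0 ≤ m) (he : 0 ≤ e)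
    (hfg : ∀ i < k, f i = g i + e)
    (hgm : ∀ i < k, m ≤ g i) (hfB : ∀ i < k, f i ≤ B) :
    (k : ℤ) * e * m ^ (k - 1) ≤ (∏ i ∈ range k, f i) - (∏ i ∈ range k, g i) ∧
      (∏ i ∈ range k, f i) - (∏ i ∈ range k, g i) ≤ (k : ℤ) * e * B ^ (k - 1) := by
  induction k with
  | zero => simp
  | succ j ih =>
    have hgB : ∀ i < j + 1, g i ≤ B := fun i hi => by
      have := hfg i hi; have := hfB i hi; linarith
    obtain ⟨h1, h2⟩ := ih (fun i hi => hfg i (by omega)) (fun i hi => hgm i (by omega))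
      (fun i hi => hfB i (by omega))
    obtain ⟨hq1, hq2⟩ := prod_bounds_aux j m B g hm (fun i hi => hgm i (by omega))
      (fun i hi => hgB i (by omega))
    have hfj := hfg j (by omega)
    have hgmj := hgm j (by omega)
    have hfBj := hfB j (by omega)
    have hmB : m ≤ B := by linarith
    have hB0 : (0:ℤ) ≤ B := hm.trans hmB
    have hfj0 : (0:ℤ) ≤ f j := by linarith
    have key : (∏ i ∈ range (j+1), f i) - (∏ i ∈ range (j+1), g i)
        = f j * ((∏ i ∈ range j, f i) - (∏ i ∈ range j, g i)) + e * (∏ i ∈ range j, g i) := by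
      rw [prod_range_succ, prod_range_succ, hfj]; ring
    have hdnn : (0:ℤ) ≤ (∏ i ∈ range j, f i) - (∏ i ∈ range j, g i) :=
      le_trans (by positivity) h1
    have e1 := pow_pred_mul_aux m j
    have e2 := pow_pred_mul_aux B j
    constructor
    · have l1 : m * ((j:ℤ) * e * m ^ (j-1)) ≤ f j * ((∏ i ∈ range j, f i) - (∏ i ∈ range j, g i)) :=
        mul_le_mul (by linarith) h1 (by positivity) hfj0
      have l2 : e * m ^ j ≤ e * (∏ i ∈ range j, g i) := mul_le_mul_of_nonneg_left hq1 he
      rw [key]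
      push_cast
      nlinarith [l1, l2, e1]
    · have l3 : f j * ((∏ i ∈ range j, f i) - (∏ i ∈ range j, g i)) ≤ B * ((j:ℤ) * e * B ^ (j-1)) :=
        mul_le_mul hfBj h2 hdnn hB0
      have l4 : e * (∏ i ∈ range j, g i) ≤ e * B ^ j := mul_le_mul_of_nonneg_left hq2 he
      rw [key]
      push_cast
      nlinarith [l3, l4, e2]

private lemma choose_cast_prod_aux (m k : ℕ) (h : k ≤ m) :
    (m.choose k : ℤ) * (k.factorial : ℤ) = ∏ i ∈ range k, ((m : ℤ) - i) := by
  have h1 : (m.descFactorial k : ℤ) = ∏ i ∈ range k, ((m : ℤ) - i) := by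
    rw [Nat.descFactorial_eq_prod_range, Nat.cast_prod]
    refine Finset.prod_congr rfl fun i hi => ?_
    have : i ≤ m := le_of_lt (lt_of_lt_of_le (Finset.mem_range.mp hi) h)
    push_cast [Nat.cast_sub this]
    ring
  rw [← h1, Nat.descFactorial_eq_factorial_mul_choose]
  push_cast; ring

set_option maxHeartbeats 800000 in
/-- Euler-characteristic positivity: if `(n+1)·d₀·l + d·l₀ > 0`, then for all
sufficiently large `ℓ`,
`(ℓl + 1 − g)·C(ℓd+n+1, n+1) − (ℓl − l₀ + 1 − g)·C(ℓd−d₀+n+1, n+1) > 0`. -/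
theorem euler_characteristic_positivity (n d d₀ : ℕ) (hn : 1 ≤ n) (hd : 1 ≤ d) (hd₀ : 1 ≤ d₀)
    (g l₀ l : ℤ) (hg : 0 ≤ g) (hl₀ : 0 ≤ l₀)
    (hpos : ((n : ℤ) + 1) * d₀ * l + d * l₀ > 0) :
    ∃ ℓ₀ : ℕ, ∀ ℓ : ℤ, (ℓ₀ : ℤ) ≤ ℓ →
      (ℓ * l + 1 - g) * ((ℓ * d + n + 1).toNat.choose (n + 1) : ℤ) -
          (ℓ * l - l₀ + 1 - g) * ((ℓ * d - d₀ + n + 1).toNat.choose (n + 1) : ℤ) > 0 := by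
  have hd₀0 : (1:ℤ) ≤ (d₀:ℤ) := by exact_mod_cast hd₀
  have hd1 : (1:ℤ) ≤ (d:ℤ) := by exact_mod_cast hd
  have hn1 : (1:ℤ) ≤ (n:ℤ) := by exact_mod_cast hn
  have hl₀d₀ : (0:ℤ) ≤ l₀ * (d₀:ℤ) := mul_nonneg hl₀ (by linarith)
  obtain ⟨C, hCdef⟩ : ∃ x : ℤ, x = (d₀ : ℤ) + n + 1 := ⟨_, rfl⟩
  obtain ⟨M, hMdef⟩ : ∃ x : ℤ, x = |l| * ((n:ℤ)+1) * d₀ * n * ((n:ℤ) + d₀) * C^(n-1) := ⟨_, rfl⟩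
  obtain ⟨G, hGdef⟩ : ∃ x : ℤ, x = g * ((n:ℤ)+1) * d₀ * C^n := ⟨_, rfl⟩
  obtain ⟨S, hSdef⟩ : ∃ x : ℤ, x = l₀ * d₀ + G + M + d₀ := ⟨_, rfl⟩
  have hC1 : (1:ℤ) ≤ C := by rw [hCdef]; linarith
  have hC0 : (0:ℤ) ≤ C := by linarith
  have hM0 : (0:ℤ) ≤ M := by rw [hMdef]; positivity
  have hG0 : (0:ℤ) ≤ G := by rw [hGdef]; positivity
  have hS0 : (0:ℤ) ≤ S := by rw [hSdef]; linarith
  refine ⟨(2*S + 4*M + 2 + d₀).toNat, ?_⟩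
  intro ℓ hℓ
  have hℓL : 2*S + 4*M + 2 + (d₀:ℤ) ≤ ℓ := le_trans (Int.self_le_toNat _) hℓ
  have hℓpos : (0:ℤ) < ℓ := by linarith
  have hℓd₀ : (d₀:ℤ) ≤ ℓ := by linarith
  have ht : ℓ ≤ ℓ * d := le_mul_of_one_le_right hℓpos.le hd1
  obtain ⟨a, hadef⟩ : ∃ x : ℤ, x = ℓ * d - d₀ + 1 := ⟨_, rfl⟩
  obtain ⟨b, hbdef⟩ : ∃ x : ℤ, x = ℓ * d + n + 1 := ⟨_, rfl⟩
  obtain ⟨A, hAdef⟩ : ∃ x : ℤ, x = ℓ * d - d₀ + n + 1 := ⟨_, rfl⟩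
  have ha1 : (1:ℤ) ≤ a := by rw [hadef]; linarith
  have ha0 : (0:ℤ) ≤ a := by linarith
  have hab : a ≤ b := by rw [hadef, hbdef]; linarith
  have hb0 : (0:ℤ) ≤ b := by linarith
  obtain ⟨Pb, hPbdef⟩ : ∃ x : ℤ, x = ∏ i ∈ range (n+1), (b - (i:ℤ)) := ⟨_, rfl⟩
  obtain ⟨Pa, hPadef⟩ : ∃ x : ℤ, x = ∏ i ∈ range (n+1), (A - (i:ℤ)) := ⟨_, rfl⟩
  -- bounds on Pb - Pa
  have hdiff := prod_sub_prod_bounds_aux (n+1) (d₀:ℤ) a b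
      (fun i => b - (i:ℤ)) (fun i => A - (i:ℤ)) ha0 (by positivity)
      (fun i hi => by show b - (i:ℤ) = A - (i:ℤ) + d₀; rw [hbdef, hAdef]; ring)
      (fun i hi => by
        show a ≤ A - (i:ℤ)
        have : (i:ℤ) ≤ (n:ℤ) := by exact_mod_cast Nat.lt_succ_iff.mp hi
        rw [hadef, hAdef]; linarith)
      (fun i hi => by
        show b - (i:ℤ) ≤ b
        have : (0:ℤ) ≤ (i:ℤ) := by positivity
        linarith)
  rw [Nat.add_sub_cancel, ← hPbdef, ← hPadef] at hdiff
  obtain ⟨hΔl, hΔu⟩ := hdiff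
  push_cast at hΔl hΔu
  have hPalow : a ^ (n+1) ≤ Pa := by
    rw [hPadef]
    exact (prod_bounds_aux (n+1) a b (fun i => A - (i:ℤ)) ha0
      (fun i hi => by
        show a ≤ A - (i:ℤ)
        have : (i:ℤ) ≤ (n:ℤ) := by exact_mod_cast Nat.lt_succ_iff.mp hi
        rw [hadef, hAdef]; linarith)
      (fun i hi => by
        show A - (i:ℤ) ≤ b
        have h0 : (0:ℤ) ≤ (i:ℤ) := by positivity
        rw [hAdef, hbdef]; linarith)).1
  -- power difference bound
  have hpowd := (prod_sub_prod_bounds_aux n ((n:ℤ) + d₀) a b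
      (fun _ => b) (fun _ => a) ha0 (by positivity)
      (fun i hi => by show b = a + ((n:ℤ) + d₀); rw [hadef, hbdef]; ring)
      (fun i hi => le_refl a) (fun i hi => le_refl b)).2
  simp only [prod_const, card_range] at hpowd
  -- b ≤ C * a
  have hbCa : b ≤ C * a := by
    have h1 : (n:ℤ) + d₀ ≤ ((n:ℤ) + d₀) * a := le_mul_of_one_le_right (by positivity) ha1
    have h2 : b = a + ((n:ℤ) + d₀) := by rw [hadef, hbdef]; ring
    rw [h2, hCdef]; linarith [h1]
  have hbn : b ^ n ≤ C ^ n * a ^ n := by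
    calc b ^ n ≤ (C * a) ^ n := pow_le_pow_left₀ hb0 hbCa n
    _ = C ^ n * a ^ n := mul_pow C a n
  have hbn1 : b ^ (n-1) ≤ C ^ (n-1) * a ^ (n-1) := by
    calc b ^ (n-1) ≤ (C * a) ^ (n-1) := pow_le_pow_left₀ hb0 hbCa (n-1)
    _ = C ^ (n-1) * a ^ (n-1) := mul_pow C a (n-1)
  -- connect choose to products
  have hfac : (0:ℤ) < ((n+1).factorial : ℤ) := by exact_mod_cast (n+1).factorial_pos
  have hchb : ((ℓ * d + n + 1).toNat.choose (n + 1) : ℤ) * ((n+1).factorial : ℤ) = Pb := by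
    have h0 : (0:ℤ) ≤ ℓ * d + n + 1 := by linarith
    have hm : (((ℓ * d + n + 1).toNat : ℕ) : ℤ) = ℓ * d + n + 1 := Int.toNat_of_nonneg h0
    have hk : n + 1 ≤ (ℓ * d + n + 1).toNat := by
      rw [Int.le_toNat h0]; push_cast; linarith
    rw [choose_cast_prod_aux _ _ hk, hPbdef]
    exact Finset.prod_congr rfl fun i hi => by rw [hm, hbdef]
  have hcha : ((ℓ * d - d₀ + n + 1).toNat.choose (n + 1) : ℤ) * ((n+1).factorial : ℤ) = Pa := by
    have h0 : (0:ℤ) ≤ ℓ * d - d₀ + n + 1 := by linarith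
    have hm : (((ℓ * d - d₀ + n + 1).toNat : ℕ) : ℤ) = ℓ * d - d₀ + n + 1 := Int.toNat_of_nonneg h0
    have hk : n + 1 ≤ (ℓ * d - d₀ + n + 1).toNat := by
      rw [Int.le_toNat h0]; push_cast; linarith
    rw [choose_cast_prod_aux _ _ hk, hPadef]
    exact Finset.prod_congr rfl fun i hi => by rw [hm, hAdef]
  -- reduce to positivity of F
  suffices hF : 0 < (ℓ * l + 1 - g) * Pb - (ℓ * l - l₀ + 1 - g) * Pa by
    have hE : ((ℓ * l + 1 - g) * ((ℓ * d + n + 1).toNat.choose (n + 1) : ℤ) -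
        (ℓ * l - l₀ + 1 - g) * ((ℓ * d - d₀ + n + 1).toNat.choose (n + 1) : ℤ)) *
        ((n+1).factorial : ℤ) =
        (ℓ * l + 1 - g) * Pb - (ℓ * l - l₀ + 1 - g) * Pa := by
      rw [← hchb, ← hcha]; ring
    have hprod : 0 < ((ℓ * l + 1 - g) * ((ℓ * d + n + 1).toNat.choose (n + 1) : ℤ) -
        (ℓ * l - l₀ + 1 - g) * ((ℓ * d - d₀ + n + 1).toNat.choose (n + 1) : ℤ)) *
        ((n+1).factorial : ℤ) := by rw [hE]; exact hF
    rcases mul_pos_iff.mp hprod with ⟨h1, _⟩ | ⟨_, h2⟩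
    · exact h1
    · linarith
  -- main estimates
  have hΔ0 : (0:ℤ) ≤ Pb - Pa := le_trans (by positivity) hΔl
  have hanpow : (0:ℤ) ≤ a ^ n := pow_nonneg ha0 n
  -- T1 : lower bound on ℓ*l*(Pb - Pa)
  have t1 : ℓ * l * (((n:ℤ)+1) * d₀ * a ^ n) - ℓ * |l| * (((n:ℤ)+1) * d₀ * (b ^ n - a ^ n))
      ≤ ℓ * l * (Pb - Pa) := by
    have hba : a ^ n ≤ b ^ n := pow_le_pow_left₀ ha0 hab n
    rcases abs_cases l with ⟨h1, h2⟩ | ⟨h1, h2⟩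
    · rw [h1]
      have hll : (0:ℤ) ≤ ℓ * l := mul_nonneg hℓpos.le h2
      have h3 := mul_le_mul_of_nonneg_left hΔl hll
      have hnn : (0:ℤ) ≤ ℓ * l * (((n:ℤ)+1) * d₀ * (b ^ n - a ^ n)) :=
        mul_nonneg hll (mul_nonneg (by positivity) (by linarith [hba]))
      linarith [h3, hnn]
    · rw [h1]
      have hll : ℓ * l ≤ 0 := mul_nonpos_of_nonneg_of_nonpos hℓpos.le h2.le
      have h3 := mul_le_mul_of_nonpos_left hΔu hll
      linarith [h3]
  -- T2 : lower bound on (1-g)*(Pb - Pa)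
  have t2 : -(g * (((n:ℤ)+1) * d₀ * b ^ n)) ≤ (1 - g) * (Pb - Pa) := by
    have h3 := mul_le_mul_of_nonneg_left hΔu hg
    linarith [h3, hΔ0]
  -- T3
  have t3 : l₀ * a ^ (n+1) ≤ l₀ * Pa := mul_le_mul_of_nonneg_left hPalow hl₀
  -- E1 : error from |l| term
  have hE1 : ℓ * |l| * (((n:ℤ)+1) * d₀ * (b ^ n - a ^ n)) ≤ ℓ * M * a ^ (n-1) := by
    have c1 : b ^ n - a ^ n ≤ (n:ℤ) * ((n:ℤ) + d₀) * (C ^ (n-1) * a ^ (n-1)) := by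
      have h3 := mul_le_mul_of_nonneg_left hbn1
        (show (0:ℤ) ≤ (n:ℤ) * ((n:ℤ) + d₀) by positivity)
      linarith [hpowd, h3]
    have hnn : (0:ℤ) ≤ ℓ * |l| * (((n:ℤ)+1) * d₀) := by positivity
    have h2 : ℓ * |l| * (((n:ℤ)+1) * d₀) * (b ^ n - a ^ n)
        ≤ ℓ * |l| * (((n:ℤ)+1) * d₀) * ((n:ℤ) * ((n:ℤ) + d₀) * (C ^ (n-1) * a ^ (n-1))) :=
      mul_le_mul_of_nonneg_left c1 hnn
    calc ℓ * |l| * (((n:ℤ)+1) * d₀ * (b ^ n - a ^ n))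
        = ℓ * |l| * (((n:ℤ)+1) * d₀) * (b ^ n - a ^ n) := by ring
      _ ≤ ℓ * |l| * (((n:ℤ)+1) * d₀) * ((n:ℤ) * ((n:ℤ) + d₀) * (C ^ (n-1) * a ^ (n-1))) := h2
      _ = ℓ * M * a ^ (n-1) := by rw [hMdef]; ring
  -- E2 : error from g term
  have hE2 : g * (((n:ℤ)+1) * d₀ * b ^ n) ≤ G * a ^ n := by
    have h2 := mul_le_mul_of_nonneg_left hbn
      (show (0:ℤ) ≤ g * (((n:ℤ)+1) * d₀) by positivity)
    calc g * (((n:ℤ)+1) * d₀ * b ^ n) = g * (((n:ℤ)+1) * d₀) * b ^ n := by ring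
      _ ≤ g * (((n:ℤ)+1) * d₀) * (C ^ n * a ^ n) := h2
      _ = G * a ^ n := by rw [hGdef]; ring
  -- main term
  have hmain : (ℓ - l₀ * d₀) * a ^ n ≤ ℓ * l * (((n:ℤ)+1) * d₀ * a ^ n) + l₀ * a ^ (n+1) := by
    have hK1 : (1:ℤ) ≤ ((n:ℤ) + 1) * d₀ * l + d * l₀ := hpos
    have h1 : ℓ - l₀ * d₀ ≤ ℓ * (((n:ℤ)+1) * d₀ * l + d * l₀) + l₀ * (1 - d₀) := by
      linarith [mul_le_mul_of_nonneg_left hK1 hℓpos.le, hl₀]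
    have h2 := mul_le_mul_of_nonneg_left h1 hanpow
    have e4 : a ^ n * (ℓ * (((n:ℤ)+1) * d₀ * l + d * l₀) + l₀ * (1 - d₀))
        = ℓ * l * (((n:ℤ)+1) * d₀ * a ^ n) + l₀ * a ^ (n+1) := by
      rw [hadef, pow_succ]; ring
    linarith [h2, e4.le, e4.ge]
  -- combine
  have hcomb : (ℓ - l₀ * d₀) * a ^ n - ℓ * M * a ^ (n-1) - G * a ^ n
      ≤ (ℓ * l + 1 - g) * Pb - (ℓ * l - l₀ + 1 - g) * Pa := by
    have hFeq : (ℓ * l + 1 - g) * Pb - (ℓ * l - l₀ + 1 - g) * Pa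
        = ℓ * l * (Pb - Pa) + (1 - g) * (Pb - Pa) + l₀ * Pa := by ring
    rw [hFeq]
    linarith [t1, t2, t3, hE1, hE2, hmain]
  -- final positivity
  have hinner : 0 < a * (ℓ - l₀ * d₀ - G) - ℓ * M := by
    have haS : ℓ - S ≤ a := by rw [hadef, hSdef]; linarith
    have huS : ℓ - S ≤ ℓ - l₀ * d₀ - G := by rw [hSdef]; linarith
    have hSnn : (0:ℤ) ≤ ℓ - S := by linarith
    have hsq : (ℓ - S) * (ℓ - S) ≤ a * (ℓ - l₀ * d₀ - G) :=
      mul_le_mul haS huS hSnn ha0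
    have hSM : M ≤ S := by rw [hSdef]; linarith
    linarith [hsq, mul_pos hℓpos (show (0:ℤ) < ℓ - 2*S - M by linarith),
      mul_self_nonneg S]
  have han1 : (1:ℤ) ≤ a ^ (n-1) := by
    calc (1:ℤ) = 1 ^ (n-1) := (one_pow _).symm
    _ ≤ a ^ (n-1) := pow_le_pow_left₀ (by norm_num) ha1 _
  have e5 : a ^ n = a ^ (n-1) * a := by
    rw [← pow_succ, Nat.sub_add_cancel hn]
  have hsplit : (ℓ - l₀ * d₀) * a ^ n - ℓ * M * a ^ (n-1) - G * a ^ n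
      = a ^ (n-1) * (a * (ℓ - l₀ * d₀ - G) - ℓ * M) := by
    rw [e5]; ring
  have hfin : 0 < (ℓ - l₀ * d₀) * a ^ n - ℓ * M * a ^ (n-1) - G * a ^ n := by
    rw [hsplit]
    calc (0:ℤ) < a * (ℓ - l₀ * d₀ - G) - ℓ * M := hinner
    _ ≤ a ^ (n-1) * (a * (ℓ - l₀ * d₀ - G) - ℓ * M) := le_mul_of_one_le_left hinner.le han1
  linarith [hcomb, hfin]
end

section
/- Let A be a commutative ring, D : A → A a derivation (an additive map satisfying the Leibniz rule D(xy) = x·D(y) + D(x)·y), κ a natural number, c ∈ A, and (a_i)_{i ∈ I}, (b_i)_{i ∈ I} finite families of elements of A with Σ_i a_i·b_i = c. If Σ_i D^k(a_i)·b_i = 0 for every k with 1 ≤ k ≤ κ, then Σ_i a_i·D^k(b_i) = D^k(c) for every k with 0 ≤ k ≤ κ. -/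
/-!
Write `P j m = Σ_i D^j(a_i)·D^m(b_i)` (`iterPairing D a b j m`). The Leibniz rule gives `D (P j m) = P j (m+1) + P (j+1) m`.
The hypotheses say `P j 0 = 0` for `1 ≤ j ≤ κ`, and this recursion propagates the vanishing to
every `P j m` with `1 ≤ j` and `j + m ≤ κ`. Then `P 0 (k+1) = D (P 0 k) - P 1 k = D (P 0 k)`,
so `P 0 k = D^k (P 0 0) = D^k c`.
-/

open Finset

section IterPairing

variable {A : Type*} [CommRing A] {I : Type*} [Fintype I]

def iterPairing (D : A → A) (a b : I → A) (j m : ℕ) : A :=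
  ∑ i, D^[j] (a i) * D^[m] (b i)

variable {D : A → A} (hadd : ∀ x y : A, D (x + y) = D x + D y)
  (hleib : ∀ x y : A, D (x * y) = x * D y + D x * y)
include hadd hleib

theorem apply_iterPairing (a b : I → A) (j m : ℕ) :
    D (iterPairing D a b j m) = iterPairing D a b j (m + 1) + iterPairing D a b (j + 1) m := by
  rw [iterPairing, ← AddMonoidHom.mk'_apply D hadd, map_sum, iterPairing, iterPairing,
    ← sum_add_distrib]
  refine sum_congr rfl fun i _ => ?_
  simp only [AddMonoidHom.mk'_apply, hleib, Function.iterate_succ_apply']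

theorem iterPairing_eq_zero_of_eq_zero_left {a b : I → A} {κ : ℕ}
    (h : ∀ j, 1 ≤ j → j ≤ κ → iterPairing D a b j 0 = 0) :
    ∀ m j, 1 ≤ j → j + m ≤ κ → iterPairing D a b j m = 0 := by
  intro m
  induction m with
  | zero => exact h
  | succ m ih =>
    intro j hj hjm
    have hD0 : D 0 = 0 := (AddMonoidHom.mk' D hadd).map_zero
    have := apply_iterPairing hadd hleib a b j m
    rwa [ih j hj (by omega), ih (j + 1) (by omega) (by omega), hD0, add_zero, eq_comm] at this

end IterPairing

/-- Reduction of the tangency equations: if `D` is a derivation on a commutative ring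
`A`, `Σ_i a_i b_i = c`, and `Σ_i D^k(a_i)·b_i = 0` for `1 ≤ k ≤ κ`, then
`Σ_i a_i·D^k(b_i) = D^k(c)` for all `0 ≤ k ≤ κ`. -/
theorem tangency_system_reduction {A : Type*} [CommRing A] (D : A → A)
    (hadd : ∀ x y : A, D (x + y) = D x + D y)
    (hleib : ∀ x y : A, D (x * y) = x * D y + D x * y)
    {I : Type*} [Fintype I] (κ : ℕ) (c : A) (a b : I → A)
    (hc : ∑ i, a i * b i = c)
    (h : ∀ k : ℕ, 1 ≤ k → k ≤ κ → ∑ i, D^[k] (a i) * b i = 0) :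
    ∀ k : ℕ, k ≤ κ → ∑ i, a i * D^[k] (b i) = D^[k] c := by
  have hvanish := iterPairing_eq_zero_of_eq_zero_left (a := a) (b := b) hadd hleib h
  change ∀ k, k ≤ κ → iterPairing D a b 0 k = D^[k] c
  intro k
  induction k with
  | zero => exact fun _ => hc
  | succ k ih =>
    intro hk
    have := apply_iterPairing hadd hleib a b 0 k
    rwa [ih (by omega), hvanish k 1 le_rfl (by omega), add_zero, eq_comm,
      ← Function.iterate_succ_apply' D] at this
end
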